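/- arXiv:2409.05487 — 5 statements merged into one kernel-verified Lean document; each statement's English description precedes it below -/
import Mathlib

section
/- Equality case of local LYM for upper shadows: if F ⊂ binom([n],k) with 0 < k < n and |∂⁺(F)|/binom(n,k+1) = |F|/binom(n,k), then F = ∅ or F = binom([n],k). -/
open Finset

/-- Equality case of local LYM for upper shadows: if `F ⊆ binom([n],k)` with `0 < k < n` and
`|∂⁺(F)|/binom(n,k+1) = |F|/binom(n,k)`, then `F = ∅` or `F` is the whole layer. -/
theorem local_lym_upshadow_equality (n k : ℕ) (hk0 : 0 < k) (hk : k < n)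
    (F : Finset (Finset (Fin n)))
    (hF : F ⊆ Finset.powersetCard k (Finset.univ : Finset (Fin n)))
    (heq : ((Finset.upShadow F).card : ℝ) / (n.choose (k + 1)) = (F.card : ℝ) / (n.choose k)) :
    F = ∅ ∨ F = Finset.powersetCard k (Finset.univ : Finset (Fin n)) := by
  classical
  rcases F.eq_empty_or_nonempty with hFe | ⟨A0, hA0⟩
  · exact Or.inl hFe
  right
  -- cards of elements
  have hsize : ∀ A ∈ F, A.card = k := by
    intro A hA
    simpa using (Finset.mem_powersetCard.1 (hF hA)).2
  have hsizeS : ∀ B ∈ Finset.upShadow F, B.card = k + 1 := by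
    intro B hB
    obtain ⟨A, hA, a, ha, rfl⟩ := Finset.mem_upShadow_iff.1 hB
    rw [Finset.card_insert_of_notMem ha, hsize A hA]
  have hchoose1 : (0:ℝ) < n.choose k := by
    exact_mod_cast Nat.cast_pos.2 (Nat.choose_pos hk.le)
  have hchoose2 : (0:ℝ) < n.choose (k+1) := by
    exact_mod_cast Nat.cast_pos.2 (Nat.choose_pos hk)
  -- cross-multiplied equality in ℕ
  have hcross : (Finset.upShadow F).card * n.choose k = F.card * n.choose (k+1) := by
    have := (div_eq_div_iff hchoose2.ne' hchoose1.ne').1 heq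
    exact_mod_cast this
  -- (k+1) * |∂⁺F| = (n-k) * |F|
  have hkey : (Finset.upShadow F).card * (k+1) = F.card * (n - k) := by
    have h2 : (Finset.upShadow F).card * n.choose k * (k+1)
        = F.card * (n.choose (k+1) * (k+1)) := by rw [hcross]; ring
    rw [Nat.choose_succ_right_eq] at h2
    have h3 : (Finset.upShadow F).card * (k+1) * n.choose k
        = F.card * (n - k) * n.choose k := by
      rw [mul_right_comm, h2]; ring
    exact Nat.eq_of_mul_eq_mul_right (Nat.choose_pos hk.le) h3
  -- double counting
  have habove : ∀ A ∈ F, ((Finset.upShadow F).bipartiteAbove (· ⊆ ·) A).card = n - k := by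
    intro A hA
    have : (Finset.upShadow F).bipartiteAbove (· ⊆ ·) A
        = (Finset.univ \ A).image (fun x => insert x A) := by
      ext B
      simp only [Finset.mem_bipartiteAbove, Finset.mem_image, Finset.mem_sdiff,
        Finset.mem_univ, true_and]
      constructor
      · rintro ⟨hB, hAB⟩
        have hc : A.card + 1 = B.card := by rw [hsize A hA, hsizeS B hB]
        obtain ⟨x, hx, rfl⟩ := Finset.exists_eq_insert_iff.2 ⟨hAB, hc⟩
        exact ⟨x, hx, rfl⟩
      · rintro ⟨x, hx, rfl⟩
        exact ⟨Finset.insert_mem_upShadow hA hx, Finset.subset_insert _ _⟩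
    rw [this, Finset.card_image_of_injOn (fun x hx y hy hxy => by
      have hx' : x ∉ A := (Finset.mem_sdiff.1 hx).2
      have hy' : y ∉ A := (Finset.mem_sdiff.1 hy).2
      by_contra hne
      have : x ∈ insert y A := hxy ▸ Finset.mem_insert_self x A
      rcases Finset.mem_insert.1 this with h | h
      · exact hne h
      · exact hx' h)]
    rw [Finset.card_sdiff_of_subset (Finset.subset_univ A), Finset.card_univ, Fintype.card_fin, hsize A hA]
  have hbelow_le : ∀ B ∈ Finset.upShadow F, (F.bipartiteBelow (· ⊆ ·) B).card ≤ k + 1 := by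
    intro B hB
    have hsub : F.bipartiteBelow (· ⊆ ·) B ⊆ Finset.powersetCard k B := by
      intro A hA
      rw [Finset.mem_bipartiteBelow] at hA
      exact Finset.mem_powersetCard.2 ⟨hA.2, hsize A hA.1⟩
    calc (F.bipartiteBelow (· ⊆ ·) B).card ≤ (Finset.powersetCard k B).card :=
          Finset.card_le_card hsub
      _ = (k+1).choose k := by rw [Finset.card_powersetCard, hsizeS B hB]
      _ = k + 1 := by simp [Nat.choose_succ_self_right]
  have hdc : ∑ A ∈ F, ((Finset.upShadow F).bipartiteAbove (· ⊆ ·) A).card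
      = ∑ B ∈ Finset.upShadow F, (F.bipartiteBelow (· ⊆ ·) B).card :=
    Finset.sum_card_bipartiteAbove_eq_sum_card_bipartiteBelow _
  have hsum1 : ∑ A ∈ F, ((Finset.upShadow F).bipartiteAbove (· ⊆ ·) A).card
      = F.card * (n - k) := by
    rw [Finset.sum_congr rfl habove, Finset.sum_const, smul_eq_mul]
  have hsum2 : ∑ B ∈ Finset.upShadow F, (F.bipartiteBelow (· ⊆ ·) B).card
      = (Finset.upShadow F).card * (k+1) := by
    rw [← hsum1, hdc] at hkey
    exact hkey.symm
  -- each fiber is full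
  have hfull : ∀ B ∈ Finset.upShadow F, (F.bipartiteBelow (· ⊆ ·) B).card = k + 1 := by
    have := (Finset.sum_eq_sum_iff_of_le hbelow_le).1 ?_
    · intro B hB; exact this B hB
    · rw [hsum2, Finset.sum_const, smul_eq_mul]
  have hpow : ∀ B ∈ Finset.upShadow F, Finset.powersetCard k B ⊆ F := by
    intro B hB
    have hsub : F.bipartiteBelow (· ⊆ ·) B ⊆ Finset.powersetCard k B := by
      intro A hA
      rw [Finset.mem_bipartiteBelow] at hA
      exact Finset.mem_powersetCard.2 ⟨hA.2, hsize A hA.1⟩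
    have hcard : (Finset.powersetCard k B).card ≤ (F.bipartiteBelow (· ⊆ ·) B).card := by
      rw [hfull B hB, Finset.card_powersetCard, hsizeS B hB]
      simp [Nat.choose_succ_self_right]
    have := Finset.eq_of_subset_of_card_le hsub hcard
    intro A hA
    rw [← this] at hA
    rw [Finset.mem_bipartiteBelow] at hA
    exact hA.1
  -- swap closure
  have hswap : ∀ A ∈ F, ∀ x, x ∉ A → ∀ y, y ∈ A → insert x (A.erase y) ∈ F := by
    intro A hA x hx y hy
    have hB : insert x A ∈ Finset.upShadow F := Finset.insert_mem_upShadow hA hx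
    apply hpow _ hB
    apply Finset.mem_powersetCard.2
    constructor
    · intro z hz
      rcases Finset.mem_insert.1 hz with rfl | hz
      · exact Finset.mem_insert_self _ _
      · exact Finset.mem_insert_of_mem (Finset.mem_of_mem_erase hz)
    · rw [Finset.card_insert_of_notMem (fun h => hx (Finset.mem_of_mem_erase h)),
        Finset.card_erase_of_mem hy, hsize A hA]
      omega
  -- connectivity by induction on |A' \ A|
  have hreach : ∀ d : ℕ, ∀ A ∈ F, ∀ A' : Finset (Fin n), A'.card = k →
      (A' \ A).card ≤ d → A' ∈ F := by
    intro d
    induction d with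
    | zero =>
      intro A hA A' hA' hle
      have : A' \ A = ∅ := Finset.card_eq_zero.1 (Nat.le_zero.1 hle)
      have hsub : A' ⊆ A := by
        intro z hz
        by_contra hz'
        exact Finset.notMem_empty z (this ▸ Finset.mem_sdiff.2 ⟨hz, hz'⟩)
      have : A' = A := Finset.eq_of_subset_of_card_le hsub (by rw [hA', hsize A hA])
      exact this ▸ hA
    | succ d ih =>
      intro A hA A' hA' hle
      rcases Nat.lt_or_ge (A' \ A).card (d+1) with h | h
      · exact ih A hA A' hA' (Nat.lt_succ_iff.1 h)
      have hcard : (A' \ A).card = d + 1 := le_antisymm hle h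
      have hne : (A' \ A).Nonempty := Finset.card_pos.1 (by omega)
      obtain ⟨x, hx⟩ := hne
      have hxA' : x ∈ A' := (Finset.mem_sdiff.1 hx).1
      have hxA : x ∉ A := (Finset.mem_sdiff.1 hx).2
      -- A \ A' nonempty since same cards
      have hne2 : (A \ A').Nonempty := by
        rw [← Finset.card_pos]
        have h1 : (A \ A').card + (A ∩ A').card = A.card := by
          rw [Finset.card_sdiff_add_card_inter]
        have h2 : (A' \ A).card + (A' ∩ A).card = A'.card := by
          rw [Finset.card_sdiff_add_card_inter]
        rw [Finset.inter_comm] at h2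
        rw [hsize A hA] at h1
        rw [hA'] at h2
        omega
      obtain ⟨y, hy⟩ := hne2
      have hyA : y ∈ A := (Finset.mem_sdiff.1 hy).1
      have hyA' : y ∉ A' := (Finset.mem_sdiff.1 hy).2
      set A1 := insert x (A.erase y) with hA1def
      have hA1 : A1 ∈ F := hswap A hA x hxA y hyA
      have hdiff : A' \ A1 = (A' \ A).erase x := by
        ext z
        simp only [Finset.mem_sdiff, Finset.mem_erase, hA1def, Finset.mem_insert]
        constructor
        · rintro ⟨hz1, hz2⟩
          push_neg at hz2
          obtain ⟨hzx, hz3⟩ := hz2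
          refine ⟨hzx, hz1, fun hzA => ?_⟩
          exact hz3 (fun hzy => hyA' (hzy ▸ hz1)) hzA
        · rintro ⟨hzx, hz1, hz2⟩
          refine ⟨hz1, ?_⟩
          push_neg
          exact ⟨hzx, fun _ => hz2⟩
      apply ih A1 hA1 A' hA'
      rw [hdiff, Finset.card_erase_of_mem hx, hcard]
      omega
  -- conclude
  apply Finset.Subset.antisymm hF
  intro A hA
  have hAk : A.card = k := by simpa using (Finset.mem_powersetCard.1 hA).2
  exact hreach (A \ A0).card A0 hA0 A hAk le_rfl
end

section
/- Let n be even, k = n/2, and j = ηn with η ≤ 1/10. If i ∈ [k] satisfies ⌈(k-i)/2⌉ < j, then binom(k-i, ⌈(k-i)/2⌉) / binom(k,j) ≤ (1 - η/2)^i. -/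
/-!
The numerator is at most `2 ^ (k - i)` and the denominator at least `(k / j) ^ j`. The case
hypothesis forces `i ≥ k - 2j`, and `2 - η ≥ 1`, so with `η = j / n` everything reduces to
`2 ^ k (j / k) ^ j ≤ (2 - η) ^ (k - 2j)`: the `n`-th power of the numeric inequality
`√2 (2η) ^ η ≤ (2 - η) ^ (1/2 - 2η)`, valid for `0 < η ≤ 1/10`.
-/

open Finset

namespace Nat

theorem pow_mul_descFactorial_le_pow_mul_descFactorial {a b : ℕ} (hab : a ≤ b) (r : ℕ) :
    b ^ r * a.descFactorial r ≤ a ^ r * b.descFactorial r := by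
  calc b ^ r * a.descFactorial r = ∏ t ∈ range r, b * (a - t) := by
        rw [descFactorial_eq_prod_range, ← pow_card_mul_prod, card_range]
    _ ≤ ∏ t ∈ range r, a * (b - t) := prod_le_prod' fun t _ => by
        rcases le_or_gt t a with hta | hta
        · rw [Nat.mul_sub, Nat.mul_sub, Nat.mul_comm b a]
          exact Nat.sub_le_sub_left (Nat.mul_le_mul_right t hab) _
        · simp [Nat.sub_eq_zero_of_le hta.le]
    _ = a ^ r * b.descFactorial r := by
        rw [descFactorial_eq_prod_range, ← pow_card_mul_prod, card_range]

theorem pow_le_pow_mul_choose {j k : ℕ} (hjk : j ≤ k) : k ^ j ≤ j ^ j * k.choose j := by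
  have h := pow_mul_descFactorial_le_pow_mul_descFactorial hjk j
  rw [descFactorial_self, descFactorial_eq_factorial_mul_choose, Nat.mul_comm (j !),
    ← Nat.mul_assoc] at h
  exact Nat.le_of_mul_le_mul_right h j.factorial_pos

theorem div_pow_le_choose {α : Type*} [Semifield α] [LinearOrder α] [IsStrictOrderedRing α]
    {j k : ℕ} (hjk : j ≤ k) : ((k : α) / j) ^ j ≤ k.choose j := by
  rcases j.eq_zero_or_pos with rfl | hj
  · simp
  rw [div_pow, div_le_iff₀' (by positivity)]
  exact_mod_cast pow_le_pow_mul_choose hjk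

end Nat

open Real

theorem rpow_pow_eq_pow_of_mul_eq {x y : ℝ} {N M : ℕ} (hx : 0 ≤ x) (h : y * N = M) :
    (x ^ y) ^ N = x ^ M := by
  rw [← rpow_mul_natCast hx, h, rpow_natCast]

theorem log_eight_mul_le {η : ℝ} (hη : 0 < η) : log (8 * η) ≤ 10 * η - 6 / 5 := by
  have h10 : log (10 * η) ≤ 10 * η - 1 := log_le_sub_one_of_pos (by positivity)
  have h54 : 1 - (5 / 4 : ℝ)⁻¹ ≤ log (5 / 4) := one_sub_inv_le_log_of_pos (by norm_num)
  have hsplit : log (10 * η) = log (5 / 4) + log (8 * η) := by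
    rw [← log_mul (by norm_num) (by positivity)]; ring_nf
  norm_num at h54
  linarith

theorem neg_le_log_one_sub_half {η : ℝ} (hη : 0 ≤ η) (hη' : η ≤ 1 / 10) :
    -(10 * η / 19) ≤ log (1 - η / 2) := by
  have hpos : 0 < 1 - η / 2 := by linarith
  have hinv : (1 - η / 2)⁻¹ ≤ 1 + 10 * η / 19 := by
    rw [inv_le_iff_one_le_mul₀ hpos]
    nlinarith
  linarith [one_sub_inv_le_log_of_pos hpos]

theorem sqrt_two_mul_rpow_le {η : ℝ} (hη : 0 < η) (hη' : η ≤ 1 / 10) :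
    (2 : ℝ) ^ (1 / 2 : ℝ) * (2 * η) ^ η ≤ (2 - η) ^ (1 / 2 - 2 * η) := by
  have h2η : 0 < 2 - η := by linarith
  rw [← log_le_log_iff (by positivity) (by positivity), log_mul (by positivity) (by positivity),
    log_rpow two_pos, log_rpow (by positivity), log_rpow h2η]
  have h8 : log (8 * η) = 2 * log 2 + log (2 * η) := by
    rw [show (8 : ℝ) * η = 2 ^ 2 * (2 * η) by ring, log_mul (by norm_num) (by positivity),
      log_pow]; push_cast; ring
  have h2 : log (2 - η) = log 2 + log (1 - η / 2) := by
    rw [← log_mul two_ne_zero (by linarith)]; ring_nf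
  have hlog2 : 0 ≤ log 2 := log_nonneg one_le_two
  -- tangent-line bounds on both logarithms leave a quadratic inequality in `η`
  have hcore : η * log (8 * η) ≤ (1 / 2 - 2 * η) * log (1 - η / 2) := by
    nlinarith [mul_le_mul_of_nonneg_left (log_eight_mul_le hη) hη.le,
      mul_le_mul_of_nonneg_left (neg_le_log_one_sub_half hη.le hη')
        (show 0 ≤ 1 / 2 - 2 * η by linarith)]
  nlinarith

theorem two_pow_mul_div_pow_le {k j : ℕ} (hj : 0 < j) (hjk : 5 * j ≤ k) :
    (2 : ℝ) ^ k * ((j : ℝ) / k) ^ j ≤ (2 - j / (2 * k)) ^ (k - 2 * j) := by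
  have hk : (0 : ℝ) < k := by exact_mod_cast (by omega : 0 < k)
  have hη : (j : ℝ) / (2 * k) ≤ 1 / 10 := by
    rw [div_le_iff₀ (by positivity)]
    have : (5 * j : ℝ) ≤ k := by exact_mod_cast hjk
    linarith
  have h := pow_le_pow_left₀ (by positivity) (sqrt_two_mul_rpow_le (by positivity) hη) (2 * k)
  rwa [mul_pow, rpow_pow_eq_pow_of_mul_eq two_pos.le (M := k) (by push_cast; ring),
    rpow_pow_eq_pow_of_mul_eq (by positivity) (M := j) (by push_cast; field_simp),
    rpow_pow_eq_pow_of_mul_eq (by linarith) (M := k - 2 * j)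
      (by rw [Nat.cast_sub (by omega)]; push_cast; field_simp),
    show 2 * ((j : ℝ) / (2 * k)) = j / k by field_simp] at h

theorem johnson_case_one_general (n k j i : ℕ) (hn : Even n) (hnpos : 0 < n) (hk : k = n / 2)
    (hjpos : 0 < j) (hη : (j : ℝ) / n ≤ 1 / 10)
    (hik : i ≤ k) (hcase : (k - i + 1) / 2 < j) :
    ((k - i).choose ((k - i + 1) / 2) : ℝ) / (k.choose j) ≤
      (1 - ((j : ℝ) / n) / 2) ^ i := by
  have h10 : 10 * j ≤ n := by
    rw [div_le_iff₀ (by positivity)] at hη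
    exact_mod_cast (by linarith : (10 * j : ℝ) ≤ n)
  obtain ⟨r, rfl⟩ := hn
  have hnk : ((r + r : ℕ) : ℝ) = 2 * k := by exact_mod_cast (by omega : r + r = 2 * k)
  rw [hnk] at hη ⊢
  have hk0 : (0 : ℝ) < k := by exact_mod_cast (by omega : 0 < k)
  calc ((k - i).choose ((k - i + 1) / 2) : ℝ) / (k.choose j)
      ≤ 2 ^ (k - i) / ((k : ℝ) / j) ^ j :=
        div_le_div₀ (by positivity) (mod_cast Nat.choose_le_two_pow _ _) (by positivity)
          (Nat.div_pow_le_choose (by omega))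
    _ = 2 ^ k * ((j : ℝ) / k) ^ j / 2 ^ i := by
        rw [← Nat.sub_add_cancel hik, pow_add, Nat.add_sub_cancel, div_pow, div_pow]
        field_simp
    _ ≤ (2 - j / (2 * k)) ^ (k - 2 * j) / 2 ^ i := by
        gcongr; exact two_pow_mul_div_pow_le hjpos (by omega)
    _ ≤ (2 - j / (2 * k)) ^ i / 2 ^ i := by
        gcongr
        · linarith
        · omega
    _ = (1 - (j : ℝ) / (2 * k) / 2) ^ i := by rw [← div_pow]; ring_nf

/-- Let `n` be even, `k = n/2`, and `j` a positive integer with `η := j/n ≤ 1/10`.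
If `i ∈ [k]` satisfies `⌈(k-i)/2⌉ < j`, then
`binom(k-i, ⌈(k-i)/2⌉) / binom(k,j) ≤ (1 - η/2)^i`. -/
theorem johnson_case_one (n k j i : ℕ) (hn : Even n) (hnpos : 0 < n) (hk : k = n / 2)
    (hjpos : 0 < j) (hη : (j : ℝ) / n ≤ 1 / 10)
    (hi1 : 1 ≤ i) (hik : i ≤ k) (hcase : (k - i + 1) / 2 < j) :
    ((k - i).choose ((k - i + 1) / 2) : ℝ) / (k.choose j) ≤
      (1 - ((j : ℝ) / n) / 2) ^ i :=
  johnson_case_one_general n k j i hn hnpos hk hjpos hη hik hcase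
end

section
/- Let n be even, k = n/2, and j a positive integer with η := j/n ≤ 1/10. If i ∈ [k] satisfies j ≤ ⌈(k-i)/2⌉, then binom(k-i, j) / binom(k, j) ≤ (1-η)^i. Moreover max_{0≤h≤i} binom(k-i, j-h) = binom(k-i, j) in this case. -/
/-!
Since `k - i ≤ k`, each factor of `binom(k-i, j) / binom(k, j) = ∏_{t<j} (k-i-t)/(k-t)` is at most
`(k-i)/k`, so the ratio is at most `(1 - i/k)^j ≤ exp(-ij/k) = exp(-2η)^i`, and
`exp(-2η) ≤ 1/(1+2η) ≤ 1-η` as `η = j/2k ≤ 1/2`.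
For the maximum, `j` lies at or below the middle of row `k-i` of Pascal's triangle, where the
binomial coefficients increase.
-/

open Finset

theorem Nat.descFactorial_mul_pow_le_descFactorial_mul_pow {a b : ℕ} (hab : a ≤ b) (j : ℕ) :
    a.descFactorial j * b ^ j ≤ b.descFactorial j * a ^ j := by
  rw [Nat.descFactorial_eq_prod_range, Nat.descFactorial_eq_prod_range, pow_eq_prod_const,
    pow_eq_prod_const, ← prod_mul_distrib, ← prod_mul_distrib]
  refine prod_le_prod' fun t _ => ?_
  rw [Nat.sub_mul, Nat.sub_mul, mul_comm b a]
  exact Nat.sub_le_sub_left (Nat.mul_le_mul_left t hab) _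

theorem Nat.choose_mul_pow_le_choose_mul_pow {a b : ℕ} (hab : a ≤ b) (j : ℕ) :
    a.choose j * b ^ j ≤ b.choose j * a ^ j := by
  have h := Nat.descFactorial_mul_pow_le_descFactorial_mul_pow hab j
  simp only [Nat.descFactorial_eq_factorial_mul_choose, mul_assoc] at h
  exact Nat.le_of_mul_le_mul_left h j.factorial_pos

theorem Nat.cast_choose_div_cast_choose_le_pow {a b : ℕ} (hab : a ≤ b) (j : ℕ) :
    (a.choose j : ℝ) / b.choose j ≤ ((a : ℝ) / b) ^ j := by
  rcases b.eq_zero_or_pos with rfl | hb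
  · obtain rfl : a = 0 := Nat.le_zero.1 hab
    cases j <;> simp
  refine div_le_of_le_mul₀ (by positivity) (by positivity) ?_
  rw [div_pow, div_mul_eq_mul_div, le_div_iff₀ (by positivity), mul_comm _ (b.choose j : ℝ)]
  exact_mod_cast Nat.choose_mul_pow_le_choose_mul_pow hab j

theorem Real.exp_neg_two_mul_le_one_sub {x : ℝ} (hx₀ : 0 ≤ x) (hx : x ≤ 1 / 2) :
    Real.exp (-(2 * x)) ≤ 1 - x := by
  rw [Real.exp_neg, inv_le_iff_one_le_mul₀ (Real.exp_pos _)]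
  nlinarith [Real.add_one_le_exp (2 * x)]

theorem one_sub_div_pow_le_one_sub_div_pow {i j : ℕ} {k : ℝ} (hk : 0 < k) (hi : i ≤ k)
    (hj : j ≤ k) : (1 - i / k) ^ j ≤ (1 - j / (2 * k)) ^ i := by
  have hη₀ : 0 ≤ (j : ℝ) / (2 * k) := by positivity
  have hη : (j : ℝ) / (2 * k) ≤ 1 / 2 := by
    rw [div_le_iff₀ (by positivity)]
    linarith
  calc (1 - i / k) ^ j
      ≤ Real.exp (-(i / k)) ^ j :=
        pow_le_pow_left₀ (sub_nonneg.2 (div_le_one_of_le₀ hi hk.le))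
          (by linarith [Real.add_one_le_exp (-(i / k))]) j
    _ = Real.exp (-(2 * (j / (2 * k)))) ^ i := by
        rw [← Real.exp_nat_mul, ← Real.exp_nat_mul]
        congr 1
        field_simp
    _ ≤ (1 - j / (2 * k)) ^ i :=
        pow_le_pow_left₀ (Real.exp_pos _).le (Real.exp_neg_two_mul_le_one_sub hη₀ hη) i

theorem Nat.choose_le_choose_of_le_of_le_half {m a b : ℕ} (hab : a ≤ b) (hb : b ≤ m / 2) :
    m.choose a ≤ m.choose b := by
  induction b, hab using Nat.le_induction with
  | base => rfl
  | succ c _ ih => exact (ih (by omega)).trans (Nat.choose_le_succ_of_lt_half_left (by omega))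

theorem Nat.choose_le_choose_of_le_of_le_ceil_half {m a b : ℕ} (hab : a ≤ b)
    (hb : b ≤ (m + 1) / 2) : m.choose a ≤ m.choose b := by
  rcases le_or_gt b (m / 2) with hb' | hb'
  · exact Nat.choose_le_choose_of_le_of_le_half hab hb'
  · rw [← Nat.choose_symm (n := m) (k := b) (by omega), show m - b = m / 2 by omega]
    exact Nat.choose_le_middle a m

theorem johnson_case_two_general (n k j i : ℕ) (hn : Even n) (hk : k = n / 2)
    (hi1 : 1 ≤ i) (hik : i ≤ k) (hcase : j ≤ (k - i + 1) / 2) :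
    ((k - i).choose j : ℝ) / (k.choose j) ≤ (1 - (j : ℝ) / n) ^ i ∧
    (Finset.range (i + 1)).sup (fun h => (k - i).choose (j - h)) = (k - i).choose j := by
  have hn2k : (n : ℝ) = 2 * k := by
    obtain ⟨m, rfl⟩ := hn
    rw [hk]
    push_cast [show (m + m) / 2 = m by omega]
    ring
  have hk₀ : (0 : ℝ) < k := by exact_mod_cast (show 0 < k by omega)
  constructor
  · calc ((k - i).choose j : ℝ) / k.choose j
        ≤ (((k - i : ℕ) : ℝ) / k) ^ j := Nat.cast_choose_div_cast_choose_le_pow (k.sub_le i) j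
      _ = (1 - i / k) ^ j := by rw [Nat.cast_sub hik, sub_div, div_self hk₀.ne']
      _ ≤ (1 - j / n) ^ i := by
        rw [hn2k]
        exact one_sub_div_pow_le_one_sub_div_pow hk₀ (by exact_mod_cast hik)
          (by exact_mod_cast (show j ≤ k by omega))
  · refine le_antisymm (Finset.sup_le fun h _ => ?_) ?_
    · exact Nat.choose_le_choose_of_le_of_le_ceil_half (j.sub_le h) hcase
    · simpa using le_sup (f := fun h => (k - i).choose (j - h)) (mem_range.2 i.succ_pos)

/-- Let `n` be even, `k = n/2`, and `j` a positive integer with `η := j/n ≤ 1/10`.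
If `i ∈ [k]` satisfies `j ≤ ⌈(k-i)/2⌉`, then `binom(k-i, j) / binom(k, j) ≤ (1-η)^i`.
Moreover `max_{0 ≤ h ≤ i} binom(k-i, j-h) = binom(k-i, j)` in this case. -/
theorem johnson_case_two (n k j i : ℕ) (hn : Even n) (hnpos : 0 < n) (hk : k = n / 2)
    (hjpos : 0 < j) (hη : (j : ℝ) / n ≤ 1 / 10)
    (hi1 : 1 ≤ i) (hik : i ≤ k) (hcase : j ≤ (k - i + 1) / 2) :
    ((k - i).choose j : ℝ) / (k.choose j) ≤ (1 - (j : ℝ) / n) ^ i ∧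
    (Finset.range (i + 1)).sup (fun h => (k - i).choose (j - h)) = (k - i).choose j :=
  johnson_case_two_general n k j i hn hk hi1 hik hcase
end

section
/- Spectral gap of the Johnson graph: let n be even and j ∈ ℕ with η := j/n ≤ 1/10. Then every nonzero eigenvalue of the normalized Laplacian L̃ = I - A/d of the Johnson graph J(n, n/2, j) is at least η/2; equivalently, the second-smallest eigenvalue μ̃₂ satisfies μ̃₂ ≥ η/2. -/
/-!
Eigenvalue `0` belongs to the constant functions, and a function invariant under every
transposition of the ground set is constant, because the transpositions generate a group acting
transitively on `k`-sets. For any other eigenfunction `f`, choose a transposition `τ` and a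
`k`-set `x` that maximise `|f x - f (τ x)|`. Since `τ` is an automorphism of `J(n, k, j)`,
subtracting the eigenvalue equations at `x` and `τ x` gives
`(1 - μ) (f x - f (τ x)) = d⁻¹ ∑_{u ~ x} (f u - f (τ u))`. The terms with `τ u = u` vanish, and the
others are at most `|f x - f (τ x)|`, so `1 - μ ≤ m / d`, where `m` is the number of neighbours of
`x` that `τ` moves. Counting them through `u ↦ (x \ u, u \ x)` gives
`m ≤ C(k-1, j)² + C(k-1, j-1)² = C(k, j)² ((k - j)² + j²) / k²`. Hence `μ ≥ 2j(k - j)/k²`,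
which is at least `j/(4k) = η/2` as soon as `8j ≤ 7k`.
-/

open Finset Equiv
open scoped Pointwise symmDiff

section LocalMaximum

variable {V : Type*} {N : V → Finset V} {d μ : ℝ} {f : V → ℝ}

theorem eigenvalue_eq_zero_of_forall_eq
    (heig : ∀ v, f v - (1 / d) * ∑ u ∈ N v, f u = μ * f v)
    {v : V} (hN : (#(N v) : ℝ) = d) (hd : d ≠ 0) (hv : f v ≠ 0) (hconst : ∀ u, f u = f v) :
    μ = 0 := by
  have h := heig v
  rw [sum_congr rfl fun u _ => hconst u, sum_const, nsmul_eq_mul, hN, one_div,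
    inv_mul_cancel_left₀ hd, sub_self] at h
  exact (mul_eq_zero.mp h.symm).resolve_right hv

theorem one_sub_eigenvalue_mul_sub_eq_sum
    (heig : ∀ v, f v - (1 / d) * ∑ u ∈ N v, f u = μ * f v)
    (σ : Perm V) (x : V) (hσ : ∀ u, u ∈ N x ↔ σ u ∈ N (σ x)) :
    (1 - μ) * (f x - f (σ x)) = 1 / d * ∑ u ∈ N x, (f u - f (σ u)) := by
  rw [sum_sub_distrib, sum_equiv σ hσ fun _ _ => rfl]
  linear_combination heig x - heig (σ x)

theorem abs_one_sub_eigenvalue_le [DecidableEq V]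
    (heig : ∀ v, f v - (1 / d) * ∑ u ∈ N v, f u = μ * f v)
    (σ : Perm V) (x : V) (hσ : ∀ u, u ∈ N x ↔ σ u ∈ N (σ x)) (hd : 0 < d)
    (hmax : ∀ u, |f u - f (σ u)| ≤ |f x - f (σ x)|) (hx : f x ≠ f (σ x)) :
    |1 - μ| ≤ #{u ∈ N x | σ u ≠ u} / d := by
  set M := |f x - f (σ x)|
  have hsum : |∑ u ∈ N x, (f u - f (σ u))| ≤ #{u ∈ N x | σ u ≠ u} * M := by
    rw [← sum_filter_of_ne (p := fun u => σ u ≠ u) fun u _ h hu => h (by rw [hu, sub_self])]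
    calc _ ≤ ∑ u ∈ N x with σ u ≠ u, |f u - f (σ u)| := abs_sum_le_sum_abs _ _
      _ ≤ ∑ u ∈ N x with σ u ≠ u, M := sum_le_sum fun u _ => hmax u
      _ = _ := by rw [sum_const, nsmul_eq_mul]
  refine le_of_mul_le_mul_right ?_ (abs_pos.2 (sub_ne_zero.2 hx))
  calc |1 - μ| * M = 1 / d * |∑ u ∈ N x, (f u - f (σ u))| := by
        rw [← abs_mul, one_sub_eigenvalue_mul_sub_eq_sum heig σ x hσ, abs_mul,
          abs_of_pos (by positivity)]
    _ ≤ 1 / d * (#{u ∈ N x | σ u ≠ u} * M) := by gcongr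
    _ = _ := by ring

end LocalMaximum

section Binomial

variable {k j : ℕ}

theorem sq_mul_add_sq_choose_pred (hj : 0 < j) :
    k ^ 2 * ((k - 1).choose j ^ 2 + (k - 1).choose (j - 1) ^ 2) =
      k.choose j ^ 2 * ((k - j) ^ 2 + j ^ 2) := by
  cases k with
  | zero => simp [Nat.choose_eq_zero_of_lt hj]
  | succ k =>
    obtain ⟨i, rfl⟩ := Nat.exists_eq_add_of_lt hj
    have h1 := Nat.choose_mul_succ_eq k (i + 1)
    have h2 := Nat.add_one_mul_choose_eq k i
    simp only [Nat.add_sub_cancel, zero_add] at *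
    calc (k + 1) ^ 2 * (k.choose (i + 1) ^ 2 + k.choose i ^ 2)
        = (k.choose (i + 1) * (k + 1)) ^ 2 + ((k + 1) * k.choose i) ^ 2 := by ring
      _ = _ := by rw [h1, h2]; ring

theorem sq_choose_pred_add_sq_le (hj : 0 < j) (h : 8 * j ≤ 7 * k) :
    ((k - 1).choose j ^ 2 + (k - 1).choose (j - 1) ^ 2 : ℝ) ≤
      (1 - j / (4 * k)) * k.choose j ^ 2 := by
  have hk : (0 : ℝ) < k := by exact_mod_cast (show 0 < k by omega)
  have hid := congrArg (Nat.cast (R := ℝ)) (sq_mul_add_sq_choose_pred (k := k) hj)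
  push_cast [Nat.cast_sub (show j ≤ k by omega)] at hid
  have hjk : ((k : ℝ) - j) ^ 2 + j ^ 2 ≤ k ^ 2 * (1 - j / (4 * k)) := by
    have : (8 * j : ℝ) ≤ 7 * k := by exact_mod_cast h
    field_simp
    nlinarith
  rw [← mul_le_mul_iff_of_pos_left (pow_pos hk 2), hid]
  calc _ ≤ (k.choose j : ℝ) ^ 2 * (k ^ 2 * (1 - j / (4 * k))) := by gcongr
    _ = _ := by ring

end Binomial

variable {α : Type*} [DecidableEq α]

namespace Finset

theorem swap_smul_finset_eq_self_iff {a b : α} {s : Finset α} :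
    swap a b • s = s ↔ (a ∈ s ↔ b ∈ s) := by
  constructor
  · intro h
    rw [← smul_mem_smul_finset_iff (swap a b), h, Perm.smul_def, swap_apply_left]
  · intro h
    ext c
    rw [← swap_inv, mem_inv_smul_finset_iff, Perm.smul_def, swap_apply_def]
    split_ifs <;> subst_vars <;> tauto

theorem card_symmDiff_eq_add (s t : Finset α) : #(s ∆ t) = #(s \ t) + #(t \ s) :=
  card_union_of_disjoint disjoint_sdiff_sdiff

theorem sdiff_prod_sdiff_injective (A : Finset α) :
    Function.Injective fun u : Finset α => (A \ u, u \ A) := by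
  have key : ∀ u, u = A \ (A \ u) ∪ u \ A := fun u => by ext; simp; tauto
  intro u v h
  simp only [Prod.mk.injEq] at h
  rw [key u, key v, h.1, h.2]

end Finset

section KSets

variable {k : ℕ}

instance : MulAction (Perm α) {A : Finset α // A.card = k} where
  smul σ A := ⟨σ • A.1, by rw [card_smul_finset, A.2]⟩
  one_smul A := Subtype.ext (one_smul _ A.1)
  mul_smul σ τ A := Subtype.ext (mul_smul σ τ A.1)

@[simp]
theorem val_perm_smul (σ : Perm α) (A : {A : Finset α // A.card = k}) : (σ • A).1 = σ • A.1 :=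
  rfl

theorem card_le_card_mul_card_of_sdiff_mem {s : Finset {B : Finset α // B.card = k}}
    {A : Finset α} {P Q : Finset (Finset α)} (h : ∀ u ∈ s, A \ u.1 ∈ P ∧ u.1 \ A ∈ Q) :
    #s ≤ #P * #Q := by
  rw [← card_product]
  exact card_le_card_of_injOn (fun u => (A \ u.1, u.1 \ A)) (fun u hu => mem_product.2 (h u hu))
    ((sdiff_prod_sdiff_injective A).comp Subtype.val_injective).injOn

variable [Fintype α]

theorem eq_of_forall_swap_smul_eq {β : Type*} {f : {A : Finset α // A.card = k} → β}
    (h : ∀ (a b : α) x, f (swap a b • x) = f x) (x y : {A : Finset α // A.card = k}) :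
    f x = f y := by
  have := Set.powersetCard.isPretransitive (α := α) (n := k)
  obtain ⟨σ, hσ⟩ := MulAction.exists_smul_eq (Perm α)
    (Set.powersetCard.ofCard x.2) (Set.powersetCard.ofCard y.2)
  have hy : σ • x = y := Subtype.ext (congrArg Subtype.val hσ)
  have hinv : ∀ τ : Perm α, f (τ • x) = f x := fun τ =>
    τ.swap_induction_on (by rw [one_smul]) fun τ a b _ ih => by rw [mul_smul, h, ih]
  rw [← hy, hinv]

theorem exists_max_abs_sub_swap_smul (f : {A : Finset α // A.card = k} → ℝ)
    (hf : ∃ (a b : α) (x : {A : Finset α // A.card = k}), f (swap a b • x) ≠ f x) :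
    ∃ (x : {A : Finset α // A.card = k}) (a b : α), a ∈ x.1 ∧ b ∉ x.1 ∧
      f x ≠ f (swap a b • x) ∧ ∀ u, |f u - f (swap a b • u)| ≤ |f x - f (swap a b • x)| := by
  obtain ⟨a', b', x', hne⟩ := hf
  obtain ⟨⟨x, a, b⟩, -, hmax⟩ := exists_max_image univ
    (fun p : {A : Finset α // A.card = k} × α × α => |f p.1 - f (swap p.2.1 p.2.2 • p.1)|)
    ⟨_, mem_univ (x', a', b')⟩
  have hx : f x ≠ f (swap a b • x) := fun h => hne <| by
    have := hmax (x', a', b') (mem_univ _)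
    simp only [h, sub_self, abs_zero, abs_nonpos_iff, sub_eq_zero] at this
    exact this.symm
  have hmoved : ¬(a ∈ x.1 ↔ b ∈ x.1) := fun h =>
    hx (congrArg f (Subtype.ext (swap_smul_finset_eq_self_iff.2 h))).symm
  by_cases ha : a ∈ x.1
  · exact ⟨x, a, b, ha, by tauto, hx, fun u => hmax (u, a, b) (mem_univ _)⟩
  · refine ⟨x, b, a, by tauto, ha, by rwa [swap_comm], fun u => ?_⟩
    rw [swap_comm]
    exact hmax (u, a, b) (mem_univ _)

end KSets

section Johnson

variable [Fintype α] {k j : ℕ}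

def johnsonNbhd (j : ℕ) (A : {A : Finset α // A.card = k}) :
    Finset {A : Finset α // A.card = k} :=
  {u | #(u.1 ∆ A.1) = 2 * j}

variable {A u : {A : Finset α // A.card = k}}

theorem smul_mem_johnsonNbhd_iff (σ : Perm α) :
    σ • u ∈ johnsonNbhd j (σ • A) ↔ u ∈ johnsonNbhd j A := by
  simp [johnsonNbhd, ← smul_finset_symmDiff, card_smul_finset]

theorem card_sdiff_of_mem_johnsonNbhd (hu : u ∈ johnsonNbhd j A) :
    #(A.1 \ u.1) = j ∧ #(u.1 \ A.1) = j := by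
  have h1 : #(A.1 \ u.1) = #(u.1 \ A.1) := card_sdiff_comm (A.2.trans u.2.symm)
  have h2 := card_symmDiff_eq_add u.1 A.1
  rw [(mem_filter.1 hu).2] at h2
  omega

theorem card_johnsonNbhd {l : ℕ} (hA : #A.1ᶜ = l) :
    #(johnsonNbhd j A) = k.choose j * l.choose j := by
  calc #(johnsonNbhd j A) = #(powersetCard j A.1 ×ˢ powersetCard j A.1ᶜ) := ?_
    _ = k.choose j * l.choose j := by
      rw [card_product, card_powersetCard, card_powersetCard, A.2, hA]
  refine card_bij (fun u _ => (A.1 \ u.1, u.1 \ A.1)) (fun u hu => ?_)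
    (fun u _ v _ h => Subtype.val_injective (sdiff_prod_sdiff_injective A.1 h)) (fun p hp => ?_)
  · obtain ⟨h1, h2⟩ := card_sdiff_of_mem_johnsonNbhd hu
    simp only [mem_product, mem_powersetCard]
    exact ⟨⟨sdiff_subset, h1⟩, fun c hc => mem_compl.2 (mem_sdiff.1 hc).2, h2⟩
  · obtain ⟨S, T⟩ := p
    simp only [mem_product, mem_powersetCard, subset_compl_iff_disjoint_right] at hp
    obtain ⟨⟨hSA, hS⟩, hTA, hT⟩ := hp
    have e1 : A.1 \ (A.1 \ S ∪ T) = S := by grind [disjoint_left]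
    have e2 : (A.1 \ S ∪ T) \ A.1 = T := by grind [disjoint_left]
    have hcard : #(A.1 \ S ∪ T) = k := by
      rw [card_union_of_disjoint (disjoint_of_subset_left sdiff_subset hTA.symm),
        card_sdiff_of_subset hSA, A.2, hS, hT, Nat.sub_add_cancel (hS ▸ A.2 ▸ card_le_card hSA)]
    refine ⟨⟨_, hcard⟩, ?_, by rw [e1, e2]⟩
    simp only [johnsonNbhd, mem_filter, mem_univ, true_and, card_symmDiff_eq_add, e1, e2, hS, hT]
    ring

theorem card_filter_swap_smul_ne_le {l : ℕ} (hj : 0 < j) (hA : #A.1ᶜ = l) {a b : α}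
    (ha : a ∈ A.1) (hb : b ∉ A.1) :
    #{u ∈ johnsonNbhd j A | swap a b • u ≠ u} ≤
      (k - 1).choose j * (l - 1).choose j + (k - 1).choose (j - 1) * (l - 1).choose (j - 1) := by
  have hsplit : {u ∈ johnsonNbhd j A | swap a b • u ≠ u} ⊆
      {u ∈ johnsonNbhd j A | a ∈ u.1 ∧ b ∉ u.1} ∪ {u ∈ johnsonNbhd j A | a ∉ u.1 ∧ b ∈ u.1} := by
    intro u
    simp only [mem_filter, mem_union, ne_eq, ← Subtype.val_inj, val_perm_smul,
      swap_smul_finset_eq_self_iff]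
    tauto
  refine (card_le_card hsplit).trans <| (card_union_le _ _).trans <| add_le_add ?_ ?_
  · refine (card_le_card_mul_card_of_sdiff_mem (A := A.1) (P := powersetCard j (A.1.erase a))
      (Q := powersetCard j (A.1ᶜ.erase b)) fun u hu => ?_).trans_eq ?_
    · rw [mem_filter] at hu
      obtain ⟨h1, h2⟩ := card_sdiff_of_mem_johnsonNbhd hu.1
      simp only [mem_powersetCard, h1, h2, and_true]
      constructor <;> intro c <;> simp <;> grind
    · rw [card_powersetCard, card_powersetCard, card_erase_of_mem ha,
        card_erase_of_mem (mem_compl.2 hb), A.2, hA]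
  · refine (card_le_card_mul_card_of_sdiff_mem (A := A.1)
      (P := {S ∈ powersetCard j A.1 | {a} ⊆ S}) (Q := {T ∈ powersetCard j A.1ᶜ | {b} ⊆ T})
      fun u hu => ?_).trans_eq ?_
    · rw [mem_filter] at hu
      obtain ⟨h1, h2⟩ := card_sdiff_of_mem_johnsonNbhd hu.1
      simp only [mem_filter, mem_powersetCard, h1, h2, and_true, singleton_subset_iff]
      constructor <;> simp [subset_iff] <;> grind
    · rw [card_filter_powersetCard_subset _ _ _ (by simpa) (by simpa),
        card_filter_powersetCard_subset _ _ _ (by simpa) (by simpa), card_singleton,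
        card_singleton, A.2, hA]

theorem card_compl_of_card_eq_two_mul (hα : Fintype.card α = 2 * k) :
    #A.1ᶜ = k := by
  rw [card_compl, hα, A.2]
  omega

theorem card_johnsonNbhd_of_card_eq_two_mul (hα : Fintype.card α = 2 * k) :
    #(johnsonNbhd j A) = k.choose j ^ 2 := by
  rw [card_johnsonNbhd (card_compl_of_card_eq_two_mul hα), sq]

theorem div_le_eigenvalue_of_exists_swap_smul_ne (hα : Fintype.card α = 2 * k)
    (hjk : 8 * j ≤ 7 * k) {d μ : ℝ} (hd : d = k.choose j ^ 2)
    {f : {A : Finset α // A.card = k} → ℝ}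
    (heig : ∀ v, f v - (1 / d) * ∑ u ∈ johnsonNbhd j v, f u = μ * f v)
    (hf : ∃ (a b : α) (x : {A : Finset α // A.card = k}), f (swap a b • x) ≠ f x) :
    j / (4 * k) ≤ μ := by
  obtain ⟨x, a, b, ha, hb, hx, hmax⟩ := exists_max_abs_sub_swap_smul f hf
  have hdpos : 0 < d := by
    rw [hd]; have := Nat.choose_pos (show j ≤ k by omega); positivity
  have hgap := abs_one_sub_eigenvalue_le heig (MulAction.toPerm (swap a b)) x
    (fun u => (smul_mem_johnsonNbhd_iff _).symm) hdpos hmax hx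
  suffices hm : (#{u ∈ johnsonNbhd j x | swap a b • u ≠ u} : ℝ) ≤ (1 - j / (4 * k)) * d by
    linarith [le_abs_self (1 - μ), hgap.trans ((div_le_iff₀ hdpos).2 hm)]
  rcases j.eq_zero_or_pos with rfl | hj
  · have := card_filter_le (johnsonNbhd 0 x) (fun u => swap a b • u ≠ u)
    rw [card_johnsonNbhd_of_card_eq_two_mul hα] at this
    simpa [hd] using this
  · calc _ ≤ (((k - 1).choose j * (k - 1).choose j +
          (k - 1).choose (j - 1) * (k - 1).choose (j - 1) : ℕ) : ℝ) := by
          exact_mod_cast card_filter_swap_smul_ne_le hj (card_compl_of_card_eq_two_mul hα) ha hb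
      _ ≤ _ := by
        rw [hd]; push_cast; simpa only [sq] using sq_choose_pred_add_sq_le hj hjk

end Johnson

/-- Spectral gap of the Johnson graph `J(n, n/2, j)`: let `n` be even and positive, and
`j ∈ ℕ` with `η := j/n ≤ 1/10`. Then every nonzero eigenvalue of the normalized Laplacian
`L̃ = I - A/d` (where `d = binom(n/2, j)²`) is at least `η/2`. -/
theorem johnson_spectral_gap (n j : ℕ) (hn : Even n) (hnpos : 0 < n)
    (hη : (j : ℝ) / n ≤ 1 / 10)
    (d : ℕ) (hd : d = ((n / 2).choose j) ^ 2)
    (μ : ℝ) (f : {A : Finset (Fin n) // A.card = n / 2} → ℝ) (hf : f ≠ 0)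
    (heig : ∀ v : {A : Finset (Fin n) // A.card = n / 2},
      f v - (1 / (d : ℝ)) *
        ∑ u ∈ Finset.univ.filter
          (fun u : {A : Finset (Fin n) // A.card = n / 2} =>
            (symmDiff u.1 v.1).card = 2 * j), f u
      = μ * f v) :
    μ = 0 ∨ (j : ℝ) / n / 2 ≤ μ := by
  have hn2 : 2 * (n / 2) = n := Nat.two_mul_div_two_of_even hn
  have hα : Fintype.card (Fin n) = 2 * (n / 2) := by rw [Fintype.card_fin, hn2]
  have h10 : 10 * j ≤ n := by
    have := (div_le_div_iff₀ (by positivity) (by norm_num)).1 hη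
    exact_mod_cast (by linarith : (10 * j : ℝ) ≤ n)
  have hdC : (d : ℝ) = (n / 2).choose j ^ 2 := by rw [hd]; push_cast; rfl
  by_cases hconst : ∀ (a b : Fin n) x, f (swap a b • x) = f x
  · obtain ⟨v, hv⟩ := Function.ne_iff.1 hf
    refine .inl (eigenvalue_eq_zero_of_forall_eq (N := johnsonNbhd j) heig ?_ ?_ hv
      fun u => eq_of_forall_swap_smul_eq hconst u v)
    · rw [card_johnsonNbhd_of_card_eq_two_mul hα, hdC]; push_cast; rfl
    · rw [hdC]; have := Nat.choose_pos (show j ≤ n / 2 by omega); positivity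
  · simp only [not_forall] at hconst
    have := div_le_eigenvalue_of_exists_swap_smul_ne hα (by omega) hdC heig hconst
    rw [show (n : ℝ) = 2 * (n / 2 : ℕ) by exact_mod_cast hn2.symm, div_div]
    exact .inr (by convert this using 2; ring)
end

section
/- Edge-count corollary: let n be even, j ∈ ℕ with η := j/n ≤ 1/10, and A ⊆ binom([n], n/2). Then the number of ordered pairs (A,B) of n/2-subsets of [n] with |A Δ B| = 2j, A ∈ 𝒜 and B ∉ 𝒜 is at least (1/2)·η·μ(𝒜)(1-μ(𝒜))·d·binom(n, n/2), where d = binom(n/2, j)² and μ(𝒜) = |𝒜|/binom(n, n/2). -/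
/-!
The spectral gap is replaced by a symmetrization (canonical path) argument; write `n = 2k` and
`N = C(n, k)`. For `m ≤ k` fix a walk `T = W₀, …, W_ℓ` in the generalized Johnson graph
`J(n, k, j)` with `|T \ W_ℓ| = m` and `j ℓ ≤ m + 2j`. A permutation `g` with `g T ∈ 𝒜` and
`g W_ℓ ∉ 𝒜` separates some step `(g W_i, g W_{i+1})`. Since the permutations act transitively
on the ordered pairs of `k`-sets at any fixed distance, counting such `g` shows that the
proportion of pairs at distance `m` separated by `𝒜` is at most `ℓ` times the proportion of
`j`-edges separated by `𝒜`. Summing over `m` with `∑ₘ C(k,m)² = N` gives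
`j d |𝒜| (N - |𝒜|) ≤ n N e(𝒜, 𝒜ᶜ)`.
-/

open Finset MulAction
open scoped Pointwise

section Separated

variable {Y : Type*} [DecidableEq Y]

def separatedPairs (𝒜 : Finset Y) (O : Finset (Y × Y)) : Finset (Y × Y) :=
  {p ∈ O | p.1 ∈ 𝒜 ∧ p.2 ∉ 𝒜}

theorem card_separatedPairs_product_self {K 𝒜 : Finset Y} (h𝒜 : 𝒜 ⊆ K) :
    #(separatedPairs 𝒜 (K ×ˢ K)) = #𝒜 * (#K - #𝒜) := by
  rw [← card_sdiff_of_subset h𝒜, ← card_product]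
  congr 1
  ext ⟨A, B⟩
  simp only [separatedPairs, mem_filter, mem_product, mem_sdiff]
  constructor
  · rintro ⟨⟨-, hB⟩, hA, hB'⟩
    exact ⟨hA, hB, hB'⟩
  · rintro ⟨hA, hB, hB'⟩
    exact ⟨⟨h𝒜 hA, hB⟩, hA, hB'⟩

end Separated

section Action

variable (G : Type*) {X : Type*} [Group G] [Fintype G] [MulAction G X] [DecidableEq X]

theorem card_smul_eq_eq_card_stabilizer {x y : X} (hy : y ∈ orbit G x) :
    #{g : G | g • x = y} = Nat.card (stabilizer G x) := by
  obtain ⟨g₀, rfl⟩ := hy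
  rw [← SetLike.coe_sort_coe, Nat.card_coe_set_eq, ← Set.ncard_coe_finset]
  refine Set.ncard_congr (fun g _ => g₀⁻¹ * g) ?_ ?_ ?_
  · intro g hg
    simp_all [mul_smul]
  · intro a b _ _ h
    simpa using h
  · intro g hg
    exact ⟨g₀ * g, by simp_all [mul_smul], by group⟩

theorem card_filter_smul_mem_mul_card {x : X} {O S : Finset X}
    (hO : (O : Set X) = orbit G x) (hS : S ⊆ O) :
    #{g : G | g • x ∈ S} * #O = Nat.card G * #S := by
  have hfib : #{g : G | g • x ∈ S} = #S * Nat.card (stabilizer G x) := by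
    rw [card_eq_sum_card_fiberwise (f := (· • x)) (t := S) (fun g hg => by simpa using hg)]
    rw [sum_const_nat fun y hy => ?_]
    have hyO : y ∈ orbit G x := by rw [← hO]; exact hS hy
    rw [filter_filter, ← card_smul_eq_eq_card_stabilizer G hyO]
    congr 1
    ext g
    simp only [mem_filter, mem_univ, true_and, and_iff_right_iff_imp]
    rintro rfl
    exact hy
  have horb : #O = (orbit G x).ncard := by rw [← hO, Set.ncard_coe_finset]
  rw [hfib, horb, ← index_stabilizer, mul_assoc, Subgroup.card_mul_index, mul_comm]


variable {Y : Type*} [MulAction G Y] [DecidableEq Y]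

theorem card_separating_mul_card {x : Y × Y} {O : Finset (Y × Y)}
    (hO : (O : Set (Y × Y)) = orbit G x) (𝒜 : Finset Y) :
    #{g : G | g • x.1 ∈ 𝒜 ∧ g • x.2 ∉ 𝒜} * #O = Nat.card G * #(separatedPairs 𝒜 O) := by
  rw [separatedPairs, ← card_filter_smul_mem_mul_card G hO (filter_subset _ _)]
  congr 3
  ext g
  have hgx : g • x ∈ O := by rw [← mem_coe, hO]; exact mem_orbit x g
  simp [hgx]

theorem card_separating_le_sum_darts {H : SimpleGraph Y} {u v : Y} (p : H.Walk u v)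
    (𝒜 : Finset Y) :
    #{g : G | g • u ∈ 𝒜 ∧ g • v ∉ 𝒜} ≤
      ∑ d ∈ p.darts.toFinset, #{g : G | g • d.fst ∈ 𝒜 ∧ g • d.snd ∉ 𝒜} := by
  classical
  refine (card_le_card fun g hg => ?_).trans card_biUnion_le
  simp only [mem_filter, mem_univ, true_and] at hg
  obtain ⟨d, hd, hcross⟩ := p.exists_boundary_dart {y | g • y ∈ 𝒜} hg.1 hg.2
  exact mem_biUnion.2 ⟨d, List.mem_toFinset.2 hd, by simpa using hcross⟩

theorem card_separatedPairs_mul_le {H : SimpleGraph Y} {u v : Y} (p : H.Walk u v)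
    (𝒜 : Finset Y) {O O' : Finset (Y × Y)} (hO : (O : Set (Y × Y)) = orbit G (u, v))
    (hO' : ∀ d ∈ p.darts, (O' : Set (Y × Y)) = orbit G d.toProd) :
    #(separatedPairs 𝒜 O) * #O' ≤ p.length * #(separatedPairs 𝒜 O') * #O := by
  refine Nat.le_of_mul_le_mul_left ?_ (Nat.card_pos (α := G))
  calc Nat.card G * (#(separatedPairs 𝒜 O) * #O')
      = #{g : G | g • u ∈ 𝒜 ∧ g • v ∉ 𝒜} * #O * #O' := by
        rw [card_separating_mul_card G hO, mul_assoc]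
    _ ≤ (∑ d ∈ p.darts.toFinset, #{g : G | g • d.fst ∈ 𝒜 ∧ g • d.snd ∉ 𝒜}) * #O' * #O := by
        rw [mul_right_comm]
        gcongr
        exact card_separating_le_sum_darts G p 𝒜
    _ = ∑ d ∈ p.darts.toFinset, Nat.card G * #(separatedPairs 𝒜 O') * #O := by
        rw [sum_mul, sum_mul]
        refine sum_congr rfl fun d hd => ?_
        rw [card_separating_mul_card G (hO' d (List.mem_toFinset.1 hd))]
    _ ≤ p.length * (Nat.card G * #(separatedPairs 𝒜 O') * #O) := by
        rw [sum_const, smul_eq_mul, ← p.length_darts]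
        gcongr
        exact List.toFinset_card_le _
    _ = Nat.card G * (p.length * #(separatedPairs 𝒜 O') * #O) := by ring

end Action

theorem Equiv.Perm.exists_comp_eq_of_card_fiber_eq {α β : Type*} [Fintype α] [DecidableEq β]
    {f f' : α → β} (h : ∀ b, #{a | f a = b} = #{a | f' a = b}) :
    ∃ g : Equiv.Perm α, ∀ a, f' (g a) = f a := by
  simp only [← Fintype.card_subtype] at h
  exact ⟨Equiv.ofFiberEquiv fun b => Fintype.equivOfCardEq (h b), Equiv.ofFiberEquiv_map _⟩

section Johnson

variable {α : Type*} [Fintype α] [DecidableEq α]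

theorem exists_perm_smul_eq_smul_eq {P Q A C : Finset α} (hP : #P = #A) (hQ : #Q = #C)
    (hPQ : #(P ∩ Q) = #(A ∩ C)) :
    ∃ g : Equiv.Perm α, g • P = A ∧ g • Q = C := by
  have hAC := card_inter_add_card_sdiff A C
  have hCA := card_inter_add_card_sdiff C A
  have hPQ' := card_inter_add_card_sdiff P Q
  have hQP := card_inter_add_card_sdiff Q P
  have hA := card_union_add_card_inter A C
  have hP' := card_union_add_card_inter P Q
  rw [inter_comm] at hCA hQP
  -- the fibres of `a ↦ (a ∈ A, a ∈ C)` are the four cells of the Venn diagram of `A` and `C`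
  obtain ⟨g, hg⟩ := Equiv.Perm.exists_comp_eq_of_card_fiber_eq
    (f := fun a => ((a ∈ A : Bool), (a ∈ C : Bool)))
    (f' := fun a => ((a ∈ P : Bool), (a ∈ Q : Bool))) <| by
    rintro ⟨_ | _, _ | _⟩ <;>
      simp only [Prod.mk.injEq, decide_eq_true_eq, decide_eq_false_iff_not, ← not_or, filter_not,
        filter_mem_eq_inter, filter_or, filter_and, univ_inter,
        ← compl_eq_univ_sdiff, card_compl, ← sdiff_eq_inter_compl, inter_comm _ᶜ] <;>
      omega
  simp only [Prod.mk.injEq, decide_eq_decide] at hg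
  refine ⟨g⁻¹, ?_, ?_⟩ <;> ext a <;> simp [mem_inv_smul_finset_iff, Equiv.Perm.smul_def, hg]

variable (α) in
def johnsonPairs (k m : ℕ) : Finset (Finset α × Finset α) :=
  {p ∈ powersetCard k univ ×ˢ powersetCard k univ | #(p.1 \ p.2) = m}

@[simp]
theorem mem_johnsonPairs {k m : ℕ} {p : Finset α × Finset α} :
    p ∈ johnsonPairs α k m ↔ #p.1 = k ∧ #p.2 = k ∧ #(p.1 \ p.2) = m := by
  simp [johnsonPairs, and_assoc]

theorem coe_johnsonPairs_eq_orbit {k m : ℕ} {p : Finset α × Finset α}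
    (hp : p ∈ johnsonPairs α k m) :
    (johnsonPairs α k m : Set (Finset α × Finset α)) = orbit (Equiv.Perm α) p := by
  obtain ⟨P, Q⟩ := p
  ext ⟨A, C⟩
  simp only [mem_coe, mem_johnsonPairs, mem_orbit_iff, Prod.smul_mk, Prod.mk.injEq] at hp ⊢
  constructor
  · rintro ⟨hA, hC, hAC⟩
    have := card_inter_add_card_sdiff A C
    have := card_inter_add_card_sdiff P Q
    exact exists_perm_smul_eq_smul_eq (by omega) (by omega) (by omega)
  · rintro ⟨g, rfl, rfl⟩
    simp [card_smul_finset, ← smul_finset_sdiff, hp]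

theorem card_filter_card_sdiff_eq {k m : ℕ} {A : Finset α} (hA : #A = k) :
    #{C ∈ powersetCard k univ | #(A \ C) = m} = k.choose m * (Fintype.card α - k).choose m := by
  rw [← hA, ← card_compl, ← card_powersetCard, ← card_powersetCard, ← card_product]
  have hsplit : ∀ X Y : Finset α, X ⊆ A → Y ⊆ Aᶜ →
      A \ (A \ X ∪ Y) = X ∧ (A \ X ∪ Y) \ A = Y := by
    intro X Y hX hY
    constructor <;> ext a <;> have := @hX a <;> have := @hY a <;>
      simp only [mem_sdiff, mem_union, mem_compl] at * <;> tauto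
  refine card_nbij' (fun C => (A \ C, C \ A)) (fun p => (A \ p.1) ∪ p.2) ?_ ?_ ?_ ?_
  · intro C hC
    simp only [coe_filter, mem_powersetCard, subset_univ, true_and, Set.mem_ofPred_eq] at hC
    simp [hC.2, card_sdiff_comm hC.1]
  · rintro ⟨X, Y⟩ hXY
    simp only [coe_product, Set.mem_prod, SetLike.mem_coe, mem_powersetCard] at hXY
    obtain ⟨⟨hXA, hX⟩, hYA, hY⟩ := hXY
    have hdisj : Disjoint (A \ X) Y :=
      (subset_compl_iff_disjoint_left.1 hYA).mono_left sdiff_subset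
    have := card_le_card hXA
    simp only [coe_filter, mem_powersetCard, subset_univ, true_and, Set.mem_ofPred_eq,
      (hsplit X Y hXA hYA).1, card_union_of_disjoint hdisj, card_sdiff_of_subset hXA]
    omega
  · intro C _
    ext a
    simp only [mem_union, mem_sdiff]
    tauto
  · rintro ⟨X, Y⟩ hXY
    simp only [coe_product, Set.mem_prod, SetLike.mem_coe, mem_powersetCard] at hXY
    exact Prod.ext_iff.2 (hsplit X Y hXY.1.1 hXY.2.1)

theorem card_johnsonPairs (k m : ℕ) :
    #(johnsonPairs α k m) =
      (Fintype.card α).choose k * (k.choose m * (Fintype.card α - k).choose m) := by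
  rw [johnsonPairs, card_eq_sum_ones, sum_filter, sum_product]
  simp_rw [← sum_filter, ← card_eq_sum_ones]
  rw [sum_congr rfl fun A hA => card_filter_card_sdiff_eq (mem_powersetCard.1 hA).2, sum_const,
    card_powersetCard, card_univ, smul_eq_mul]

variable (α) in
def johnsonGraph (k j : ℕ) : SimpleGraph (Finset α) where
  Adj A B := A ≠ B ∧ (A, B) ∈ johnsonPairs α k j
  symm.symm A B h := by
    simp only [mem_johnsonPairs] at h ⊢
    exact ⟨h.1.symm, h.2.2.1, h.2.1, by rw [card_sdiff_comm (h.2.2.1.trans h.2.1.symm), h.2.2.2]⟩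
  loopless.irrefl A h := h.1 rfl

@[simp]
theorem johnsonGraph_adj {k j : ℕ} {A B : Finset α} :
    (johnsonGraph α k j).Adj A B ↔ A ≠ B ∧ (A, B) ∈ johnsonPairs α k j :=
  Iff.rfl

theorem johnsonGraph_adj_of_mem {k j : ℕ} (hj : 0 < j) {A B : Finset α}
    (h : (A, B) ∈ johnsonPairs α k j) : (johnsonGraph α k j).Adj A B := by
  refine johnsonGraph_adj.2 ⟨?_, h⟩
  rintro rfl
  simp only [mem_johnsonPairs, sdiff_self, bot_eq_empty, card_empty] at h
  omega

omit [Fintype α] in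
theorem exists_subset_card_sdiff_eq {U T : Finset α} {a b : ℕ} (ha : a ≤ #(U ∩ T))
    (hb : b ≤ #(U \ T)) : ∃ R ⊆ U, #R = a + b ∧ #(R \ T) = b := by
  obtain ⟨R₁, h₁, rfl⟩ := exists_subset_card_eq ha
  obtain ⟨R₂, h₂, rfl⟩ := exists_subset_card_eq hb
  have hR₁ : ∀ x ∈ R₁, x ∈ T := fun x hx => (mem_inter.1 (h₁ hx)).2
  have hR₂ : ∀ x ∈ R₂, x ∉ T := fun x hx => (mem_sdiff.1 (h₂ hx)).2
  refine ⟨R₁ ∪ R₂, union_subset (h₁.trans inter_subset_left) (h₂.trans sdiff_subset), ?_, ?_⟩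
  · exact card_union_of_disjoint (disjoint_left.2 fun x hx₁ hx₂ => hR₂ x hx₂ (hR₁ x hx₁))
  · congr 1
    ext x
    have := hR₁ x
    have := hR₂ x
    simp only [mem_sdiff, mem_union]
    tauto

omit [Fintype α] in
theorem card_sdiff_union_sdiff_add {W R D : Finset α} (hR : R ⊆ W) (hD : Disjoint W D)
    (T : Finset α) : #((W \ R ∪ D) \ T) + #(R \ T) = #(W \ T) + #(D \ T) := by
  have hsplit : (W \ R ∪ D) \ T = (W \ T) \ (R \ T) ∪ D \ T := by
    ext a
    have := @hR a
    have : a ∈ D → a ∉ W := fun h => disjoint_right.1 hD h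
    simp only [mem_sdiff, mem_union]
    tauto
  have hdisj : Disjoint ((W \ T) \ (R \ T)) (D \ T) :=
    (hD.mono_left (sdiff_subset.trans sdiff_subset)).mono_right sdiff_subset
  have hRT : R \ T ⊆ W \ T := sdiff_subset_sdiff hR le_rfl
  rw [hsplit, card_union_of_disjoint hdisj, card_sdiff_of_subset hRT]
  have := card_le_card hRT
  omega

theorem exists_mem_johnsonPairs_of_triangle {k j s s' : ℕ} (hα : k + k ≤ Fintype.card α)
    {T W : Finset α} (hTW : (T, W) ∈ johnsonPairs α k s) (h₁ : s' ≤ s + j) (h₂ : s ≤ s' + j)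
    (h₃ : j ≤ s + s') (h₄ : s + s' + j ≤ k + k) :
    ∃ W', (W, W') ∈ johnsonPairs α k j ∧ (T, W') ∈ johnsonPairs α k s' := by
  simp only [mem_johnsonPairs] at hTW
  obtain ⟨hT, hW, hs⟩ := hTW
  have hWT : #(W \ T) = s := by rw [card_sdiff_comm (hW.trans hT.symm), hs]
  have hinter : #(W ∩ T) + s = k := by rw [← hWT, card_inter_add_card_sdiff, hW]
  have hout : k - s ≤ #(Wᶜ \ T) := by
    rw [sdiff_eq_inter_compl, ← compl_union, card_compl]
    have := card_union_add_card_inter W T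
    omega
  have hin : #(Wᶜ ∩ T) = s := by rw [inter_comm, ← sdiff_eq_inter_compl, hs]
  -- `W'` drops `x` points of `W ∩ T` and `j - x` of `W \ T`, and gains `j - y` points of `T \ W`
  -- and `y` points outside `W ∪ T`
  obtain ⟨x, y, hxy, hx, hy, hxk, hyk, hjx, hjy⟩ : ∃ x y, x + y + s = s' + j ∧ x ≤ j ∧ y ≤ j ∧
      x + s ≤ k ∧ y + s ≤ k ∧ j ≤ x + s ∧ j ≤ y + s := by
    set x := min (min j (k - s)) (s' + j - s - (j - s))
    exact ⟨x, s' + j - s - x, by omega⟩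
  obtain ⟨R, hRW, hR, hRT⟩ := exists_subset_card_sdiff_eq (U := W) (T := T) (a := x) (b := j - x)
    (by omega) (by omega)
  obtain ⟨D, hDW, hD, hDT⟩ := exists_subset_card_sdiff_eq (U := Wᶜ) (T := T) (a := j - y) (b := y)
    (by omega) (by omega)
  have hWD : Disjoint W D := subset_compl_iff_disjoint_left.1 hDW
  have hcard := card_sdiff_union_sdiff_add hRW hWD ∅
  have hcardT := card_sdiff_union_sdiff_add hRW hWD T
  simp only [sdiff_empty] at hcard
  have hsdiff : W \ (W \ R ∪ D) = R := by
    ext a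
    have := @hRW a
    have : a ∈ D → a ∉ W := fun h => disjoint_right.1 hWD h
    simp only [mem_sdiff, mem_union]
    tauto
  refine ⟨W \ R ∪ D, ?_, ?_⟩ <;> simp only [mem_johnsonPairs]
  · exact ⟨hW, by omega, by rw [hsdiff, hR]; omega⟩
  · exact ⟨hT, by omega, by rw [card_sdiff_comm (by omega : #T = #(W \ R ∪ D))]; omega⟩

theorem exists_walk_johnsonGraph {k j m : ℕ} (hj : 0 < j) (h2j : 2 * j ≤ k)
    (hα : k + k ≤ Fintype.card α) {T : Finset α} (hT : #T = k) (hm : m ≤ k) :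
    ∃ W, (T, W) ∈ johnsonPairs α k m ∧
      ∃ p : (johnsonGraph α k j).Walk T W, j * p.length ≤ m + 2 * j := by
  induction m using Nat.strong_induction_on with
  | _ m ih =>
  have hTT : (T, T) ∈ johnsonPairs α k 0 := by simp [hT]
  rcases Nat.eq_zero_or_pos m with rfl | hm₀
  · exact ⟨T, hTT, .nil, by simp⟩
  rcases le_or_gt m j with hmj | hjm
  · obtain ⟨W₁, h₁, hT₁⟩ := exists_mem_johnsonPairs_of_triangle (j := j) (s' := j) hα hTT
      (by omega) (by omega) (by omega) (by omega)
    obtain ⟨W₂, h₂, hT₂⟩ := exists_mem_johnsonPairs_of_triangle (j := j) (s' := m) hα hT₁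
      (by omega) (by omega) (by omega) (by omega)
    refine ⟨W₂, hT₂,
      .cons (johnsonGraph_adj_of_mem hj h₁) (.cons (johnsonGraph_adj_of_mem hj h₂) .nil), ?_⟩
    simp only [SimpleGraph.Walk.length_cons, SimpleGraph.Walk.length_nil]
    omega
  · obtain ⟨W, hW, p, hp⟩ := ih (m - j) (by omega) (by omega)
    obtain ⟨W', h, hTW'⟩ := exists_mem_johnsonPairs_of_triangle (j := j) (s' := m) hα hW
      (by omega) (by omega) (by omega) (by omega)
    refine ⟨W', hTW', p.concat (johnsonGraph_adj_of_mem hj h), ?_⟩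
    rw [SimpleGraph.Walk.length_concat, mul_add_one]
    omega

theorem card_separatedPairs_johnsonPairs_le (𝒜 : Finset (Finset α)) {k j m : ℕ} (hj : 0 < j)
    (h2j : 2 * j ≤ k) (hα : k + k ≤ Fintype.card α) (hm : m ≤ k) :
    j * #(separatedPairs 𝒜 (johnsonPairs α k m)) * (k.choose j * (Fintype.card α - k).choose j) ≤
      (m + 2 * j) * #(separatedPairs 𝒜 (johnsonPairs α k j)) *
        (k.choose m * (Fintype.card α - k).choose m) := by
  obtain ⟨T, -, hT⟩ := exists_subset_card_eq (s := (univ : Finset α)) (n := k) (by simp; omega)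
  obtain ⟨W, hW, p, hp⟩ := exists_walk_johnsonGraph hj h2j hα hT hm
  have hcomp := card_separatedPairs_mul_le (Equiv.Perm α) p 𝒜 (coe_johnsonPairs_eq_orbit hW)
    fun d _ => coe_johnsonPairs_eq_orbit (johnsonGraph_adj.1 d.adj).2
  rw [card_johnsonPairs, card_johnsonPairs] at hcomp
  have hcomp' : #(separatedPairs 𝒜 (johnsonPairs α k m)) *
      (k.choose j * (Fintype.card α - k).choose j) ≤
      p.length * #(separatedPairs 𝒜 (johnsonPairs α k j)) *
        (k.choose m * (Fintype.card α - k).choose m) := by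
    refine Nat.le_of_mul_le_mul_left ?_ (Nat.choose_pos (n := Fintype.card α) (k := k) (by omega))
    convert hcomp using 1 <;> ring
  calc j * #(separatedPairs 𝒜 (johnsonPairs α k m)) * (k.choose j * (Fintype.card α - k).choose j)
      ≤ j * (p.length * #(separatedPairs 𝒜 (johnsonPairs α k j)) *
          (k.choose m * (Fintype.card α - k).choose m)) := by
        rw [mul_assoc]
        gcongr
    _ = j * p.length * #(separatedPairs 𝒜 (johnsonPairs α k j)) *
          (k.choose m * (Fintype.card α - k).choose m) := by ring
    _ ≤ (m + 2 * j) * #(separatedPairs 𝒜 (johnsonPairs α k j)) *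
          (k.choose m * (Fintype.card α - k).choose m) := by gcongr

theorem card_separatedPairs_eq_sum (𝒜 : Finset (Finset α)) (k : ℕ) :
    #(separatedPairs 𝒜 (powersetCard k univ ×ˢ powersetCard k univ)) =
      ∑ m ∈ range (k + 1), #(separatedPairs 𝒜 (johnsonPairs α k m)) := by
  rw [card_eq_sum_card_fiberwise (f := fun p => #(p.1 \ p.2)) (t := range (k + 1))]
  · refine sum_congr rfl fun m _ => congrArg card ?_
    ext p
    simp only [separatedPairs, johnsonPairs, mem_filter]
    tauto
  · intro p hp
    simp only [separatedPairs, coe_filter, mem_product, mem_powersetCard] at hp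
    simpa [Nat.lt_succ_iff, ← hp.1.1.2] using card_le_card sdiff_subset

theorem card_separatedPairs_le {k : ℕ} (hα : Fintype.card α = k + k) {j : ℕ} (hj : 0 < j)
    (h2j : 2 * j ≤ k) {𝒜 : Finset (Finset α)} (h𝒜 : 𝒜 ⊆ powersetCard k univ) :
    j * k.choose j ^ 2 * (#𝒜 * ((k + k).choose k - #𝒜)) ≤
      (k + k) * (k + k).choose k * #(separatedPairs 𝒜 (johnsonPairs α k j)) := by
  have hcross := card_separatedPairs_product_self h𝒜
  rw [card_powersetCard, card_univ, hα] at hcross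
  calc j * k.choose j ^ 2 * (#𝒜 * ((k + k).choose k - #𝒜))
      = ∑ m ∈ range (k + 1), j * k.choose j ^ 2 * #(separatedPairs 𝒜 (johnsonPairs α k m)) := by
        rw [← hcross, card_separatedPairs_eq_sum, mul_sum]
    _ ≤ ∑ m ∈ range (k + 1),
          (k + k) * #(separatedPairs 𝒜 (johnsonPairs α k j)) * k.choose m ^ 2 := by
        refine sum_le_sum fun m hm => ?_
        have hmk : m ≤ k := Nat.lt_succ_iff.1 (mem_range.1 hm)
        have := card_separatedPairs_johnsonPairs_le 𝒜 hj h2j hα.ge hmk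
        simp only [hα, Nat.add_sub_cancel, ← sq] at this
        calc j * k.choose j ^ 2 * #(separatedPairs 𝒜 (johnsonPairs α k m))
            = j * #(separatedPairs 𝒜 (johnsonPairs α k m)) * k.choose j ^ 2 := by ring
          _ ≤ (m + 2 * j) * #(separatedPairs 𝒜 (johnsonPairs α k j)) * k.choose m ^ 2 := this
          _ ≤ (k + k) * #(separatedPairs 𝒜 (johnsonPairs α k j)) * k.choose m ^ 2 := by
              gcongr
    _ = (k + k) * (k + k).choose k * #(separatedPairs 𝒜 (johnsonPairs α k j)) := by
        rw [← mul_sum, Nat.sum_range_choose_sq, two_mul]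
        ring

omit [Fintype α] in
theorem card_symmDiff_eq_two_mul_card_sdiff {A B : Finset α} (h : #A = #B) :
    #(symmDiff A B) = 2 * #(A \ B) := by
  rw [symmDiff_def, sup_eq_union, card_union_of_disjoint disjoint_sdiff_sdiff,
    card_sdiff_comm h.symm, two_mul]

theorem filter_card_symmDiff_eq_separatedPairs (𝒜 : Finset (Finset α)) (k j : ℕ) :
    {p ∈ powersetCard k (univ : Finset α) ×ˢ powersetCard k (univ : Finset α) |
      #(symmDiff p.1 p.2) = 2 * j ∧ p.1 ∈ 𝒜 ∧ p.2 ∉ 𝒜} =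
      separatedPairs 𝒜 (johnsonPairs α k j) := by
  ext ⟨A, B⟩
  simp only [mem_filter, mem_product, mem_powersetCard, subset_univ, true_and, separatedPairs,
    mem_johnsonPairs]
  constructor
  · rintro ⟨⟨hA, hB⟩, hAB, h⟩
    rw [card_symmDiff_eq_two_mul_card_sdiff (hA.trans hB.symm)] at hAB
    exact ⟨⟨hA, hB, by omega⟩, h⟩
  · rintro ⟨⟨hA, hB, hAB⟩, h⟩
    exact ⟨⟨hA, hB⟩, by rw [card_symmDiff_eq_two_mul_card_sdiff (hA.trans hB.symm), hAB], h⟩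

end Johnson

theorem johnson_edge_count_general (n j : ℕ) (hn : Even n)
    (hη : (j : ℝ) / n ≤ 1 / 10)
    (𝒜 : Finset (Finset (Fin n)))
    (h𝒜 : 𝒜 ⊆ Finset.powersetCard (n / 2) (Finset.univ : Finset (Fin n)))
    (μA : ℝ) (hμA : μA = (𝒜.card : ℝ) / (n.choose (n / 2))) :
    (1 / 2) * ((j : ℝ) / n) * μA * (1 - μA) * ((((n / 2).choose j) ^ 2 : ℕ) : ℝ)
        * (n.choose (n / 2)) ≤
      ((((Finset.powersetCard (n / 2) (Finset.univ : Finset (Fin n))) ×ˢ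
          (Finset.powersetCard (n / 2) (Finset.univ : Finset (Fin n)))).filter
        (fun p => (symmDiff p.1 p.2).card = 2 * j ∧ p.1 ∈ 𝒜 ∧ p.2 ∉ 𝒜)).card : ℝ) := by
  obtain ⟨k, rfl⟩ := hn
  rw [show (k + k) / 2 = k by omega] at h𝒜 hμA ⊢
  rw [filter_card_symmDiff_eq_separatedPairs, hμA]
  set N := (k + k).choose k
  set E := #(separatedPairs 𝒜 (johnsonPairs (Fin (k + k)) k j))
  rcases eq_or_ne ((j : ℝ) / ↑(k + k)) 0 with h0 | h0
  · simp only [h0, mul_zero, zero_mul]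
    positivity
  obtain ⟨hj, hn⟩ : 0 < j ∧ 0 < k + k := by simpa [Nat.pos_iff_ne_zero, div_ne_zero_iff] using h0
  have h2j : 2 * j ≤ k := by
    have h10 : (10 * j : ℝ) ≤ k + k := by
      rw [div_le_div_iff₀ (by exact_mod_cast hn) (by norm_num)] at hη
      push_cast at hη
      linarith
    have : 10 * j ≤ k + k := by exact_mod_cast h10
    omega
  have hA : #𝒜 ≤ N := by simpa using card_le_card h𝒜
  have hN : (0 : ℝ) < N := by exact_mod_cast Nat.choose_pos (by omega)
  have key : (j * (k.choose j ^ 2 : ℕ) * (#𝒜 * (N - #𝒜)) : ℝ) ≤ ↑(k + k) * N * E := by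
    exact_mod_cast card_separatedPairs_le (by simp) hj h2j h𝒜
  calc _ = (j * (k.choose j ^ 2 : ℕ) * (#𝒜 * (N - #𝒜)) : ℝ) / (2 * ↑(k + k) * N) := by field_simp
    _ ≤ E := by
      rw [div_le_iff₀ (by positivity)]
      linarith [(by positivity : (0 : ℝ) ≤ ↑(k + k) * N * E)]

/-- Edge-count corollary: let `n` be even and positive, `j ∈ ℕ` with `η := j/n ≤ 1/10`, and
`𝒜 ⊆ binom([n], n/2)`. Then the number of ordered pairs `(A,B)` of `n/2`-subsets of `[n]`
with `|A Δ B| = 2j`, `A ∈ 𝒜` and `B ∉ 𝒜` is at least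
`(1/2)·η·μ(𝒜)(1-μ(𝒜))·d·binom(n, n/2)` where `d = binom(n/2, j)²`. -/
theorem johnson_edge_count (n j : ℕ) (hn : Even n) (hnpos : 0 < n)
    (hη : (j : ℝ) / n ≤ 1 / 10)
    (𝒜 : Finset (Finset (Fin n)))
    (h𝒜 : 𝒜 ⊆ Finset.powersetCard (n / 2) (Finset.univ : Finset (Fin n)))
    (μA : ℝ) (hμA : μA = (𝒜.card : ℝ) / (n.choose (n / 2))) :
    (1 / 2) * ((j : ℝ) / n) * μA * (1 - μA) * ((((n / 2).choose j) ^ 2 : ℕ) : ℝ)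
        * (n.choose (n / 2)) ≤
      ((((Finset.powersetCard (n / 2) (Finset.univ : Finset (Fin n))) ×ˢ
          (Finset.powersetCard (n / 2) (Finset.univ : Finset (Fin n)))).filter
        (fun p => (symmDiff p.1 p.2).card = 2 * j ∧ p.1 ∈ 𝒜 ∧ p.2 ∉ 𝒜)).card : ℝ) :=
  johnson_edge_count_general n j hn hη 𝒜 h𝒜 μA hμA
end
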